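/- Let λ > 0 be small and consider the closed curve θ ↦ (2√5 λ^{5/4} cos θ + λ^{3/2}O(λ), 50 λ^{11/4} sin θ + λ³O(λ)) in ℝ². For λ sufficiently small, the winding number of this curve around the origin equals 1, hence the curve's underlying map has a zero (the origin is enclosed). -/

import Mathlib

set_option maxHeartbeats 1000000


open Real

/-- Winding-number computation from the proof of Proposition `proptransv`: the closed
curve `θ ↦ (2√5 λ^{5/4}cos θ + λ^{3/2}O(λ), 50 λ^{11/4}sin θ + λ³O(λ))` in
`ℝ² = ℂ`, with perturbations bounded by `M·λ`, does not pass through the origin for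
`λ` small, and has winding number `1` around the origin: it is homotopic, through
`2π`-periodic loops avoiding the origin, to the standard unit circle loop
`θ ↦ exp(iθ)`. -/
theorem winding_number_one (M : ℝ) (hM : 0 < M)
    (E₁ E₂ : ℝ → ℝ → ℝ)
    (hcont : ∀ lam : ℝ, Continuous (E₁ lam) ∧ Continuous (E₂ lam))
    (hper : ∀ lam θ : ℝ, E₁ lam (θ + 2 * π) = E₁ lam θ ∧ E₂ lam (θ + 2 * π) = E₂ lam θ)
    (hbd : ∀ lam θ : ℝ, 0 < lam → |E₁ lam θ| ≤ M * lam ∧ |E₂ lam θ| ≤ M * lam)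
    (γ : ℝ → ℝ → ℂ)
    (hγ : ∀ lam θ : ℝ, γ lam θ =
      ((2 * Real.sqrt 5 * lam ^ ((5 : ℝ) / 4) * Real.cos θ
          + lam ^ ((3 : ℝ) / 2) * E₁ lam θ : ℝ) : ℂ)
        + ((50 * lam ^ ((11 : ℝ) / 4) * Real.sin θ
          + lam ^ (3 : ℝ) * E₂ lam θ : ℝ) : ℂ) * Complex.I) :
    ∃ lam₀ > 0, ∀ lam : ℝ, 0 < lam → lam < lam₀ →
      (∀ θ : ℝ, γ lam θ ≠ 0) ∧
      ∃ H : ℝ → ℝ → ℂ,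
        Continuous (fun p : ℝ × ℝ => H p.1 p.2) ∧
        (∀ θ : ℝ, H 0 θ = γ lam θ) ∧
        (∀ θ : ℝ, H 1 θ = Complex.exp (θ * Complex.I)) ∧
        (∀ t θ : ℝ, t ∈ Set.Icc (0 : ℝ) 1 → H t θ ≠ 0) ∧
        (∀ t θ : ℝ, H t (θ + 2 * π) = H t θ) := by
  refine ⟨min (1 / (2 * M)) (1 / 100), lt_min (by positivity) (by norm_num), fun lam hlam hlt => ?_⟩
  have hM2 : M * lam < 1 / 2 := by
    have h1 : lam < 1 / (2 * M) := lt_of_lt_of_le hlt (min_le_left _ _)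
    have := mul_lt_mul_of_pos_left h1 hM
    rw [mul_one_div] at this
    calc M * lam < M / (2 * M) := this
      _ = 1 / 2 := by field_simp
  have hl100 : lam < 1 / 100 := lt_of_lt_of_le hlt (min_le_right _ _)
  have hl1 : lam < 1 := by linarith
  -- powers
  have hp54 : (0:ℝ) < lam ^ ((5:ℝ)/4) := Real.rpow_pos_of_pos hlam _
  have hp32 : (0:ℝ) < lam ^ ((3:ℝ)/2) := Real.rpow_pos_of_pos hlam _
  have hp114 : (0:ℝ) < lam ^ ((11:ℝ)/4) := Real.rpow_pos_of_pos hlam _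
  have hp3 : (0:ℝ) < lam ^ ((3:ℝ)) := Real.rpow_pos_of_pos hlam _
  have h32le : lam ^ ((3:ℝ)/2) ≤ lam ^ ((5:ℝ)/4) :=
    Real.rpow_le_rpow_of_exponent_ge hlam hl1.le (by norm_num)
  have h3le : lam ^ ((3:ℝ)) ≤ lam ^ ((11:ℝ)/4) :=
    Real.rpow_le_rpow_of_exponent_ge hlam hl1.le (by norm_num)
  have h54lam : lam ^ ((5:ℝ)/4) ≤ lam := by
    nth_rewrite 2 [← Real.rpow_one lam]
    exact Real.rpow_le_rpow_of_exponent_ge hlam hl1.le (by norm_num)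
  have h114lam : lam ^ ((11:ℝ)/4) ≤ lam := by
    nth_rewrite 2 [← Real.rpow_one lam]
    exact Real.rpow_le_rpow_of_exponent_ge hlam hl1.le (by norm_num)
  have hs5 : (2:ℝ) ≤ Real.sqrt 5 := by
    nlinarith [Real.sq_sqrt (by norm_num : (5:ℝ) ≥ 0), Real.sqrt_nonneg 5]
  have hs5' : Real.sqrt 5 < 3 := by
    nlinarith [Real.sq_sqrt (by norm_num : (5:ℝ) ≥ 0), Real.sqrt_nonneg 5]
  set a := 2 * Real.sqrt 5 * lam ^ ((5:ℝ)/4) with ha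
  set b := 50 * lam ^ ((11:ℝ)/4) with hb
  have ha1 : a ≤ 1 := by nlinarith
  have hb1 : b ≤ 1 := by nlinarith
  have ha0 : 4 * lam ^ ((5:ℝ)/4) ≤ a := by nlinarith
  -- the homotopy
  set H : ℝ → ℝ → ℂ := fun t θ =>
    ((((1 - t) * a + t) * Real.cos θ + (1 - t) * (lam ^ ((3:ℝ)/2) * E₁ lam θ) : ℝ) : ℂ)
      + ((((1 - t) * b + t) * Real.sin θ + (1 - t) * (lam ^ ((3:ℝ)) * E₂ lam θ) : ℝ) : ℂ)
        * Complex.I with hH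
  have key : ∀ t θ : ℝ, 0 ≤ t → t ≤ 1 → H t θ ≠ 0 := by
    intro t θ ht0 ht1 h
    rw [hH] at h
    simp only [Complex.ext_iff, Complex.add_re, Complex.ofReal_re, Complex.mul_re,
      Complex.I_re, Complex.I_im, Complex.ofReal_im, Complex.add_im, Complex.mul_im,
      Complex.zero_re, Complex.zero_im] at h
    obtain ⟨hx, hy⟩ := h
    have hE := hbd lam θ hlam
    have hct : a ≤ (1 - t) * a + t := by nlinarith
    have hdt : b ≤ (1 - t) * b + t := by nlinarith
    have hctpos : 0 < (1 - t) * a + t := by nlinarith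
    have hdtpos : 0 < (1 - t) * b + t := by nlinarith
    have e1 : ((1 - t) * a + t) * Real.cos θ = -((1 - t) * (lam ^ ((3:ℝ)/2) * E₁ lam θ)) := by
      linarith
    have e2 : ((1 - t) * a + t) * |Real.cos θ| ≤ lam ^ ((3:ℝ)/2) * (M * lam) := by
      have := abs_mul ((1 - t) * a + t) (Real.cos θ)
      rw [abs_of_pos hctpos] at this
      rw [← this, e1, abs_neg, abs_mul, abs_mul, abs_of_nonneg (by linarith : (0:ℝ) ≤ 1 - t),
        abs_of_pos hp32]
      calc (1 - t) * (lam ^ ((3:ℝ)/2) * |E₁ lam θ|)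
          ≤ 1 * (lam ^ ((3:ℝ)/2) * (M * lam)) := by
            apply mul_le_mul (by linarith) (mul_le_mul_of_nonneg_left hE.1 hp32.le)
              (by positivity) zero_le_one
        _ = lam ^ ((3:ℝ)/2) * (M * lam) := one_mul _
    have hcos : |Real.cos θ| ≤ 1 / 8 := by
      have h1 : lam ^ ((3:ℝ)/2) * (M * lam) ≤ lam ^ ((5:ℝ)/4) * (1 / 2) := by
        apply mul_le_mul h32le hM2.le (by positivity) hp54.le
      have h2 : (4 * lam ^ ((5:ℝ)/4)) * |Real.cos θ| ≤ lam ^ ((5:ℝ)/4) * (1 / 2) := by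
        calc (4 * lam ^ ((5:ℝ)/4)) * |Real.cos θ|
            ≤ ((1 - t) * a + t) * |Real.cos θ| :=
              mul_le_mul_of_nonneg_right (le_trans ha0 hct) (abs_nonneg _)
          _ ≤ lam ^ ((3:ℝ)/2) * (M * lam) := e2
          _ ≤ lam ^ ((5:ℝ)/4) * (1 / 2) := h1
      nlinarith [abs_nonneg (Real.cos θ)]
    have e1' : ((1 - t) * b + t) * Real.sin θ = -((1 - t) * (lam ^ ((3:ℝ)) * E₂ lam θ)) := by
      linarith
    have e2' : ((1 - t) * b + t) * |Real.sin θ| ≤ lam ^ ((3:ℝ)) * (M * lam) := by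
      have := abs_mul ((1 - t) * b + t) (Real.sin θ)
      rw [abs_of_pos hdtpos] at this
      rw [← this, e1', abs_neg, abs_mul, abs_mul, abs_of_nonneg (by linarith : (0:ℝ) ≤ 1 - t),
        abs_of_pos hp3]
      calc (1 - t) * (lam ^ ((3:ℝ)) * |E₂ lam θ|)
          ≤ 1 * (lam ^ ((3:ℝ)) * (M * lam)) := by
            apply mul_le_mul (by linarith) (mul_le_mul_of_nonneg_left hE.2 hp3.le)
              (by positivity) zero_le_one
        _ = lam ^ ((3:ℝ)) * (M * lam) := one_mul _
    have hsin : |Real.sin θ| ≤ 1 / 100 := by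
      have h1 : lam ^ ((3:ℝ)) * (M * lam) ≤ lam ^ ((11:ℝ)/4) * (1 / 2) := by
        apply mul_le_mul h3le hM2.le (by positivity) hp114.le
      have h2 : (50 * lam ^ ((11:ℝ)/4)) * |Real.sin θ| ≤ lam ^ ((11:ℝ)/4) * (1 / 2) := by
        calc (50 * lam ^ ((11:ℝ)/4)) * |Real.sin θ|
            ≤ ((1 - t) * b + t) * |Real.sin θ| :=
              mul_le_mul_of_nonneg_right hdt (abs_nonneg _)
          _ ≤ lam ^ ((3:ℝ)) * (M * lam) := e2'
          _ ≤ lam ^ ((11:ℝ)/4) * (1 / 2) := h1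
      nlinarith [abs_nonneg (Real.sin θ)]
    nlinarith [Real.sin_sq_add_cos_sq θ, sq_abs (Real.cos θ), sq_abs (Real.sin θ),
      abs_nonneg (Real.cos θ), abs_nonneg (Real.sin θ)]
  have h0 : ∀ θ : ℝ, H 0 θ = γ lam θ := by
    intro θ
    rw [hH, hγ]
    push_cast [ha, hb]
    ring
  refine ⟨fun θ => by rw [← h0 θ]; exact key 0 θ le_rfl zero_le_one, H, ?_, h0, ?_, ?_, ?_⟩
  · rw [hH]
    have c1 : Continuous fun p : ℝ × ℝ =>
        ((1 - p.1) * a + p.1) * Real.cos p.2 + (1 - p.1) * (lam ^ ((3:ℝ)/2) * E₁ lam p.2) :=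
      ((((continuous_const.sub continuous_fst).mul continuous_const).add continuous_fst).mul
        (Real.continuous_cos.comp continuous_snd)).add
        ((continuous_const.sub continuous_fst).mul
          (continuous_const.mul ((hcont lam).1.comp continuous_snd)))
    have c2 : Continuous fun p : ℝ × ℝ =>
        ((1 - p.1) * b + p.1) * Real.sin p.2 + (1 - p.1) * (lam ^ ((3:ℝ)) * E₂ lam p.2) :=
      ((((continuous_const.sub continuous_fst).mul continuous_const).add continuous_fst).mul
        (Real.continuous_sin.comp continuous_snd)).add
        ((continuous_const.sub continuous_fst).mul
          (continuous_const.mul ((hcont lam).2.comp continuous_snd)))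
    exact (Complex.continuous_ofReal.comp c1).add
      ((Complex.continuous_ofReal.comp c2).mul continuous_const)
  · intro θ
    rw [hH]
    norm_num
    rw [Complex.exp_mul_I, ← Complex.ofReal_cos, ← Complex.ofReal_sin]
  · intro t θ ht
    exact key t θ ht.1 ht.2
  · intro t θ
    rw [hH]
    simp only [Real.cos_add_two_pi, Real.sin_add_two_pi, (hper lam θ).1, (hper lam θ).2]
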